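/- Let L be the subgroup of ℤ⁴ ⊕ ℤ⁴ (with standard basis x₁,…,x₄ for the first summand and y₁,…,y₄ for the second) consisting of all vectors (a,b) with a₁+a₂+a₃+a₄ ≡ b₁+b₂+b₃+b₄ (mod 4) and a₁+a₂+a₃+a₄ ≡ 0 (mod 2). Then the 8 vectors x₁−x₂, x₁−x₃, x₁−x₄, y₁−y₂, y₁−y₃, y₁−y₄, 2x₁+2y₁, 2x₁−2y₁ form a ℤ-basis of L. (This is the basis of the character group T_G^* of a maximal torus of (GL₄×GL₄)/μ computed in the proof of Lemma 7.1 of the paper.) -/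

import Mathlib

/-- The standard basis vector `x_i` of the first summand of `ℤ⁴ ⊕ ℤ⁴`. -/
def xv (i : Fin 4) : (Fin 4 → ℤ) × (Fin 4 → ℤ) := (Pi.single i 1, 0)

/-- The standard basis vector `y_i` of the second summand of `ℤ⁴ ⊕ ℤ⁴`. -/
def yv (i : Fin 4) : (Fin 4 → ℤ) × (Fin 4 → ℤ) := (0, Pi.single i 1)

/-- The basis of the character lattice `T_G^*` of a maximal torus of `(GL₄×GL₄)/μ`
computed in the proof of Lemma 7.1. -/
theorem stmt_13 :
    LinearIndependent ℤ
      ![xv 0 - xv 1, xv 0 - xv 2, xv 0 - xv 3, yv 0 - yv 1, yv 0 - yv 2, yv 0 - yv 3,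
        2 • xv 0 + 2 • yv 0, 2 • xv 0 - 2 • yv 0] ∧
    (Submodule.span ℤ (Set.range
      ![xv 0 - xv 1, xv 0 - xv 2, xv 0 - xv 3, yv 0 - yv 1, yv 0 - yv 2, yv 0 - yv 3,
        2 • xv 0 + 2 • yv 0, 2 • xv 0 - 2 • yv 0]) : Set ((Fin 4 → ℤ) × (Fin 4 → ℤ))) =
      {v : (Fin 4 → ℤ) × (Fin 4 → ℤ) |
        (∑ i, v.1 i) ≡ (∑ i, v.2 i) [ZMOD 4] ∧ (∑ i, v.1 i) ≡ 0 [ZMOD 2]} := by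
  constructor
  · rw [Fintype.linearIndependent_iff]
    intro g hg
    simp only [Fin.sum_univ_succ, Finset.univ_unique, Fin.default_eq_zero, Finset.sum_singleton,
      Matrix.cons_val_succ, Matrix.cons_val_zero] at hg
    have h1 := congrFun (congrArg Prod.fst hg) 1
    have h2 := congrFun (congrArg Prod.fst hg) 2
    have h3 := congrFun (congrArg Prod.fst hg) 3
    have h4 := congrFun (congrArg Prod.snd hg) 1
    have h5 := congrFun (congrArg Prod.snd hg) 2
    have h6 := congrFun (congrArg Prod.snd hg) 3
    have h0 := congrFun (congrArg Prod.fst hg) 0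
    have h7 := congrFun (congrArg Prod.snd hg) 0
    simp [xv, yv, Pi.single_apply] at h0 h1 h2 h3 h4 h5 h6 h7
    have k6 : g (Fin.succ 2).succ.succ.succ = 0 := by show g 6 = 0; omega
    have k7 : g (Fin.succ 2).succ.succ.succ.succ = 0 := by show g 7 = 0; omega
    intro i
    fin_cases i
    exacts [h1, h2, h3, h4, h5, h6, k6, k7]
  · ext v
    simp only [Set.mem_setOf_eq, SetLike.mem_coe]
    constructor
    · intro hv
      induction hv using Submodule.span_induction with
      | mem w hw =>
        obtain ⟨i, rfl⟩ := hw
        fin_cases i <;> constructor <;> decide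
      | zero => exact ⟨by simp [Int.ModEq], by simp [Int.ModEq]⟩
      | add a b _ _ ha hb =>
        exact ⟨by simpa [Finset.sum_add_distrib] using ha.1.add hb.1,
          by simpa [Finset.sum_add_distrib] using ha.2.add hb.2⟩
      | smul z a _ ha =>
        refine ⟨?_, ?_⟩
        · simpa [Finset.mul_sum] using (ha.1.mul_left z)
        · simpa [Finset.mul_sum] using (ha.2.mul_left z)
    · rintro ⟨h1, h2⟩
      rw [Submodule.mem_span_range_iff_exists_fun]
      obtain ⟨k, hk⟩ : (4:ℤ) ∣ (∑ i, v.1 i) + (∑ i, v.2 i) := by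
        have := h1.dvd
        have := h2.dvd
        omega
      obtain ⟨m, hm⟩ : (4:ℤ) ∣ (∑ i, v.1 i) - (∑ i, v.2 i) := by
        have := h1.dvd
        omega
      have hs1 : (∑ i, v.1 i) = v.1 0 + v.1 1 + v.1 2 + v.1 3 := by
        rw [Fin.sum_univ_four]
      have hs2 : (∑ i, v.2 i) = v.2 0 + v.2 1 + v.2 2 + v.2 3 := by
        rw [Fin.sum_univ_four]
      refine ⟨![-(v.1 1), -(v.1 2), -(v.1 3), -(v.2 1), -(v.2 2), -(v.2 3), k, m], ?_⟩
      simp only [Fin.sum_univ_succ, Finset.univ_unique, Fin.default_eq_zero,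
        Finset.sum_singleton, Matrix.cons_val_succ, Matrix.cons_val_zero]
      refine Prod.ext (funext fun i => ?_) (funext fun i => ?_) <;>
        fin_cases i <;>
          simp [xv, yv, Pi.single_apply] <;> omega
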